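/- The canonical Poisson bracket on ℝ⁴ is mapped by φ onto the Poisson structure π1: writing φ = (φ₁, φ₂, φ₃) with φ(q1,q2,p1,p2) = (p1/a + (b/a)p2·e^{(a/2)q1} − (c/a)e^{−(a/2)q1}, p2·e^{(a/2)q1}, e^{−(a/2)q1}), one has at every point of ℝ⁴: {φ₁, φ₂}_ω = −(1/2)φ₂, {φ₁, φ₃}_ω = (1/2)φ₃, and {φ₂, φ₃}_ω = 0. -/

import Mathlib

/-- The canonical Poisson bracket on `ℝ⁴` with coordinates `(q₁,q₂,p₁,p₂)`
(indices `0,1,2,3`):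
`{F,G} = F_{q₁}G_{p₁} − F_{p₁}G_{q₁} + F_{q₂}G_{p₂} − F_{p₂}G_{q₂}`. -/
noncomputable def canonicalBracket (F G : (Fin 4 → ℝ) → ℝ) (p : Fin 4 → ℝ) : ℝ :=
  fderiv ℝ F p (Pi.single 0 1) * fderiv ℝ G p (Pi.single 2 1)
    - fderiv ℝ F p (Pi.single 2 1) * fderiv ℝ G p (Pi.single 0 1)
    + fderiv ℝ F p (Pi.single 1 1) * fderiv ℝ G p (Pi.single 3 1)
    - fderiv ℝ F p (Pi.single 3 1) * fderiv ℝ G p (Pi.single 1 1)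

/-!
`φ₂` and `φ₃` depend only on `q₁` and `p₂`, and `∂φ₂/∂q₁ = (a/2) φ₂`, `∂φ₃/∂q₁ = -(a/2) φ₃`.
Since `φ₁ = p₁/a + (b/a) φ₂ - (c/a) φ₃`, and the bracket of two functions of `(q₁, p₂)` alone
vanishes, `{φ₁, G} = -(1/a) ∂G/∂q₁` for `G = φ₂, φ₃`, while `{φ₂, φ₃} = 0`.
-/

open Real

noncomputable def phi₁ (a b c : ℝ) (q : Fin 4 → ℝ) : ℝ :=
  q 2 / a + b / a * q 3 * exp (a / 2 * q 0) - c / a * exp (-(a / 2) * q 0)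

noncomputable def phi₂ (a : ℝ) (q : Fin 4 → ℝ) : ℝ := q 3 * exp (a / 2 * q 0)

noncomputable def phi₃ (a : ℝ) (q : Fin 4 → ℝ) : ℝ := exp (-(a / 2) * q 0)

section

variable (a b c : ℝ) (p v : Fin 4 → ℝ)

theorem fderiv_phi₂_apply :
    fderiv ℝ (phi₂ a) p v = (v 3 + a / 2 * p 3 * v 0) * exp (a / 2 * p 0) := by
  unfold phi₂
  simp (disch := fun_prop) [fderiv_fun_mul, fderiv_exp, fderiv_apply]
  ring

theorem fderiv_phi₃_apply :
    fderiv ℝ (phi₃ a) p v = -(a / 2) * v 0 * exp (-(a / 2) * p 0) := by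
  unfold phi₃
  simp (disch := fun_prop) [fderiv_fun_mul, fderiv_exp, fderiv_apply, fderiv_fun_neg]
  ring

theorem fderiv_phi₁_apply :
    fderiv ℝ (phi₁ a b c) p v
      = v 2 / a + b / a * fderiv ℝ (phi₂ a) p v - c / a * fderiv ℝ (phi₃ a) p v := by
  rw [fderiv_phi₂_apply, fderiv_phi₃_apply]
  unfold phi₁
  simp (disch := fun_prop) [div_eq_mul_inv, fderiv_fun_mul, fderiv_exp, fderiv_apply,
    fderiv_fun_sub, fderiv_fun_add, fderiv_fun_neg]
  ring

end

theorem canonical_bracket_maps_to_pi1 (a b c : ℝ) (ha : a ≠ 0)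
    (φ₁ φ₂ φ₃ : (Fin 4 → ℝ) → ℝ)
    (hφ₁ : ∀ q, φ₁ q = q 2 / a + b / a * q 3 * Real.exp (a / 2 * q 0)
                        - c / a * Real.exp (-(a / 2) * q 0))
    (hφ₂ : ∀ q, φ₂ q = q 3 * Real.exp (a / 2 * q 0))
    (hφ₃ : ∀ q, φ₃ q = Real.exp (-(a / 2) * q 0)) :
    (∀ p, canonicalBracket φ₁ φ₂ p = -(1 / 2) * φ₂ p)
    ∧ (∀ p, canonicalBracket φ₁ φ₃ p = 1 / 2 * φ₃ p)
    ∧ (∀ p, canonicalBracket φ₂ φ₃ p = 0) := by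
  obtain rfl : φ₁ = phi₁ a b c := funext hφ₁
  obtain rfl : φ₂ = phi₂ a := funext hφ₂
  obtain rfl : φ₃ = phi₃ a := funext hφ₃
  refine ⟨fun p => ?_, fun p => ?_, fun p => ?_⟩ <;>
    simp [canonicalBracket, fderiv_phi₁_apply, fderiv_phi₂_apply, fderiv_phi₃_apply, phi₂, phi₃] <;>
    field_simp
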